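/- arXiv:2008.06903 — 2 statements merged into one kernel-verified Lean document; each statement's English description precedes it below -/
import Mathlib

section
/- If xⁿ ∈ Q and x⁺ ∈ Q is a scheme update of xⁿ, then the discrete energy dissipation law holds: (E_N(x⁺) − E_N(xⁿ))/τ ≤ −⟨c[xⁿ] ⊙ δ, δ⟩_E ≤ 0, where δ is the node grid function δ_i = (x⁺_i − xⁿ_i)/τ and (a ⊙ b)_i = a_i b_i; in particular E_N(x⁺) ≤ E_N(xⁿ). (Theorem 4.2.) -/
open Finset Filter

noncomputable section

/-- Forward difference onto cells: `(D_h l)_{i-1/2} = (l_i - l_{i-1})/h` (use index `i`, `1 ≤ i ≤ M`). -/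
def DhOp (h : ℝ) (l : ℕ → ℝ) (i : ℕ) : ℝ := (l i - l (i - 1)) / h

/-- Difference of a cell function back onto nodes: `(d_h φ)_i = (φ_{i+1/2} - φ_{i-1/2})/h`;
a cell function `φ` is encoded by `φ i = φ_{i-1/2}`. -/
def dhOp (h : ℝ) (φ : ℕ → ℝ) (i : ℕ) : ℝ := (φ (i + 1) - φ i) / h

/-- Central difference `D̃_h` on nodes. -/
def DtOp (M : ℕ) (h : ℝ) (l : ℕ → ℝ) (i : ℕ) : ℝ :=
  if i = 0 then (l 1 - l 0) / h
  else if i = M then (l M - l (M - 1)) / h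
  else (l (i + 1) - l (i - 1)) / (2 * h)

/-- Node inner product `⟨l, g⟩_E`. -/
def ipE (M : ℕ) (h : ℝ) (l g : ℕ → ℝ) : ℝ :=
  h * (l 0 * g 0 / 2 + (∑ i ∈ Finset.Ioo 0 M, l i * g i) + l M * g M / 2)

/-- Cell inner product `⟨φ, ψ⟩_C`. -/
def ipC (M : ℕ) (h : ℝ) (φ ψ : ℕ → ℝ) : ℝ :=
  h * ∑ i ∈ Finset.Icc 1 M, φ i * ψ i

/-- The admissible (ordered) set `Q`. -/
def inQ (M : ℕ) (X0 XM : ℝ) (l : ℕ → ℝ) : Prop :=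
  l 0 = X0 ∧ l M = XM ∧ ∀ i, 1 ≤ i → i ≤ M → l (i - 1) < l i

/-- The closure `Q̄` of the admissible set. -/
def inQbar (M : ℕ) (X0 XM : ℝ) (l : ℕ → ℝ) : Prop :=
  l 0 = X0 ∧ l M = XM ∧ ∀ i, 1 ≤ i → i ≤ M → l (i - 1) ≤ l i

/-- `Ŝ[x]_i = ⟨K(x_i - y), u₀(Y)⟩_E` for a kernel `K` (e.g. `K = W_c'`);
also used as `w[x]_i` when `K = W` itself. -/
def Shat (M : ℕ) (h : ℝ) (K : ℝ → ℝ) (u0 x : ℕ → ℝ) (i : ℕ) : ℝ :=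
  ipE M h (fun j => K (x i - x j)) u0

/-- The cell function `G[x]_{i-1/2} = s·H'(s) - H(s)`, `s = u_{0,i-1/2}/(D_h x)_{i-1/2}`. -/
def Gcell (h : ℝ) (H : ℝ → ℝ) (u0half x : ℕ → ℝ) (i : ℕ) : ℝ :=
  u0half i / DhOp h x i * deriv H (u0half i / DhOp h x i) - H (u0half i / DhOp h x i)

/-- The mobility coefficient `c[x]_i = u_{0,i}² / ((D̃_h x)_i · f(u_{0,i}/(D̃_h x)_i))`. -/
def cCoef (M : ℕ) (h : ℝ) (f : ℝ → ℝ) (u0 x : ℕ → ℝ) (i : ℕ) : ℝ :=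
  u0 i ^ 2 / (DtOp M h x i * f (u0 i / DtOp M h x i))

/-- `xp` is a scheme update of `x`: the fully discrete convex-splitting scheme equations. -/
def SchemeUpdate (M : ℕ) (h τ : ℝ) (H f Vc Ve Wc We : ℝ → ℝ)
    (u0 u0half x xp : ℕ → ℝ) : Prop :=
  ∀ i, 1 ≤ i → i ≤ M - 1 →
    cCoef M h f u0 x i * (xp i - x i) / τ =
      -dhOp h (Gcell h H u0half xp) i - u0 i * deriv Vc (xp i)
        + u0 i * deriv Ve (x i)
        - u0 i * Shat M h (deriv Wc) u0 xp i + u0 i * Shat M h (deriv We) u0 x i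

/-- The discrete total energy `E_N`. -/
def EN (M : ℕ) (h : ℝ) (H V W : ℝ → ℝ) (u0 u0half x : ℕ → ℝ) : ℝ :=
  h * ∑ i ∈ Finset.Icc 1 M, H (u0half i / DhOp h x i) * DhOp h x i
    + ipE M h u0 (fun i => V (x i))
    + 1 / 2 * ipE M h u0 (fun i => Shat M h W u0 x i)

/-- The convex part `E_{N,c}` of the discrete total energy. -/
def ENc (M : ℕ) (h : ℝ) (H Vc Wc : ℝ → ℝ) (u0 u0half x : ℕ → ℝ) : ℝ :=
  h * ∑ i ∈ Finset.Icc 1 M, H (u0half i / DhOp h x i) * DhOp h x i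
    + ipE M h u0 (fun i => Vc (x i))
    + 1 / 2 * ipE M h u0 (fun i => Shat M h Wc u0 x i)

/-- The concave (subtracted convex) part `E_{N,e}` of the discrete total energy. -/
def ENe (M : ℕ) (h : ℝ) (Ve We : ℝ → ℝ) (u0 x : ℕ → ℝ) : ℝ :=
  ipE M h u0 (fun i => Ve (x i)) + 1 / 2 * ipE M h u0 (fun i => Shat M h We u0 x i)

/-- The convex functional `J` whose minimizer over `Q` is the scheme update of `xn`. -/
def Jfun (M : ℕ) (h τ : ℝ) (H f Vc Ve Wc We : ℝ → ℝ)
    (u0 u0half xn z : ℕ → ℝ) : ℝ :=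
  1 / (2 * τ) * ipE M h (fun i => cCoef M h f u0 xn i * (z i - xn i)) (fun i => z i - xn i)
    + h * ∑ i ∈ Finset.Icc 1 M, H (u0half i / DhOp h z i) * DhOp h z i
    + ipE M h u0 (fun i => Vc (z i))
    + 1 / 2 * ipE M h u0 (fun i => Shat M h Wc u0 z i)
    - ipE M h (fun i => u0 i * deriv Ve (xn i)) z
    - ipE M h (fun i => u0 i * Shat M h (deriv We) u0 xn i) z

/-!
Convex splitting. `E_N = ENc - ENe` with both parts convex along `Q`: the internal energy through
the perspective `d ↦ d H(u/d)` of `H`, the interaction energies through convexity and evenness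
of `W_c`, `W_e`. The scheme is implicit in `ENc` and explicit in `ENe`, so the tangent inequality
of `ENc` at `x⁺` and that of `ENe` at `xⁿ` bound `E_N(x⁺) - E_N(xⁿ)` by the pairing of the
scheme's right-hand side with `x⁺ - xⁿ`, which the scheme equations turn into `-τ⟨c ⊙ δ, δ⟩_E`;
this is `≤ 0` because `c > 0` on `Q`.
-/

theorem ConvexOn.sub_le_deriv_mul_sub {S : Set ℝ} {F : ℝ → ℝ} (hF : ConvexOn ℝ S F) {x y : ℝ}
    (hx : x ∈ S) (hy : y ∈ S) (hFy : DifferentiableAt ℝ F y) :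
    F y - F x ≤ deriv F y * (y - x) := by
  rcases lt_trichotomy x y with hxy | rfl | hyx
  · simpa only [slope_def_field, div_le_iff₀ (sub_pos.2 hxy)] using
      hF.slope_le_deriv hx hy hxy hFy
  · simp
  · have h := hF.deriv_le_slope hy hx hyx hFy
    rw [slope_def_field, le_div_iff₀ (sub_pos.2 hyx)] at h
    linarith

/-- Convexity of the perspective `d ↦ d * H (u / d)`, whose derivative is
`H (u / d) - u / d * H' (u / d)`. -/
theorem ConvexOn.perspective_sub_le {H : ℝ → ℝ} (hH : ConvexOn ℝ (Set.Ioi 0) H)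
    (hHd : DifferentiableOn ℝ H (Set.Ioi 0)) {u d d' : ℝ} (hu : 0 < u) (hd : 0 < d)
    (hd' : 0 < d') :
    H (u / d) * d - H (u / d') * d' ≤ -((u / d * deriv H (u / d) - H (u / d)) * (d - d')) := by
  have hs : 0 < u / d := div_pos hu hd
  have tangent := hH.sub_le_deriv_mul_sub (div_pos hu hd') hs
    ((hHd _ hs).differentiableAt (Ioi_mem_nhds hs))
  have key : deriv H (u / d) * (u / d - u / d') * d' = u / d * deriv H (u / d) * (d' - d) := by
    field_simp
  linarith [mul_le_mul_of_nonneg_right tangent hd'.le]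

theorem Function.Even.deriv {F : ℝ → ℝ} (hF : Function.Even F) : Function.Odd (deriv F) := by
  intro s
  have h := deriv_comp_neg F (-s)
  rw [neg_neg, show (fun x => F (-x)) = F from funext hF] at h
  rw [h]

theorem Finset.sum_sum_mul_sub_of_antisymm {ι R : Type*} [CommRing R] (s : Finset ι)
    (F : ι → ι → R) (hF : ∀ i j, F j i = -F i j) (d : ι → R) :
    ∑ i ∈ s, ∑ j ∈ s, F i j * (d i - d j) = 2 * ∑ i ∈ s, ∑ j ∈ s, F i j * d i := by
  have swap : ∑ i ∈ s, ∑ j ∈ s, F i j * d j = -∑ i ∈ s, ∑ j ∈ s, F i j * d i := by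
    rw [sum_comm, ← sum_neg_distrib]
    refine sum_congr rfl fun i _ => ?_
    rw [← sum_neg_distrib]
    exact sum_congr rfl fun j _ => by rw [hF]; ring
  simp only [mul_sub, sum_sub_distrib, swap]
  ring

theorem Finset.sum_Icc_by_parts {R : Type*} [CommRing R] (M : ℕ) (hM : 1 ≤ M) (φ l : ℕ → R) :
    ∑ i ∈ Icc 1 M, φ i * (l i - l (i - 1))
      = φ M * l M - φ 1 * l 0 - ∑ i ∈ Ioo 0 M, (φ (i + 1) - φ i) * l i := by
  induction M, hM using Nat.le_induction with
  | base => simp [show Ioo 0 1 = (∅ : Finset ℕ) from rfl]; ring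
  | succ n hn ih =>
    rw [sum_Icc_succ_top (by omega), ih, Nat.add_sub_cancel,
      show Ioo 0 (n + 1) = insert n (Ioo 0 n) by ext; simp; omega, sum_insert (by simp)]
    ring

theorem ipE_add_left (M : ℕ) (h : ℝ) (l₁ l₂ g : ℕ → ℝ) :
    ipE M h (fun i => l₁ i + l₂ i) g = ipE M h l₁ g + ipE M h l₂ g := by
  simp only [ipE, add_mul, sum_add_distrib]
  ring

theorem ipE_sub_left (M : ℕ) (h : ℝ) (l₁ l₂ g : ℕ → ℝ) :
    ipE M h (fun i => l₁ i - l₂ i) g = ipE M h l₁ g - ipE M h l₂ g := by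
  simp only [ipE, sub_mul, sum_sub_distrib]
  ring

theorem ipE_sub_right (M : ℕ) (h : ℝ) (l g₁ g₂ : ℕ → ℝ) :
    ipE M h l (fun i => g₁ i - g₂ i) = ipE M h l g₁ - ipE M h l g₂ := by
  simp only [ipE, mul_sub, sum_sub_distrib]
  ring

theorem ipE_mul_swap (M : ℕ) (h : ℝ) (l g k : ℕ → ℝ) :
    ipE M h (fun i => l i * g i) k = ipE M h (fun i => l i * k i) g := by
  simp only [ipE, mul_right_comm _ (g _)]

theorem ipE_sub_ipE_le {M : ℕ} {h : ℝ} (hh : 0 ≤ h) {l g l' g' p q : ℕ → ℝ}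
    (hle : ∀ i ≤ M, l i * g i - l' i * g' i ≤ p i * q i) :
    ipE M h l g - ipE M h l' g' ≤ ipE M h p q := by
  simp only [ipE, ← mul_sub]
  refine mul_le_mul_of_nonneg_left ?_ hh
  have hint := sum_le_sum fun i (hi : i ∈ Ioo 0 M) => hle i (mem_Ioo.1 hi).2.le
  rw [sum_sub_distrib] at hint
  linarith [hle 0 (Nat.zero_le M), hle M le_rfl]

theorem ipE_mul_self_nonneg {M : ℕ} {h : ℝ} (hh : 0 ≤ h) {c g : ℕ → ℝ}
    (hc : ∀ i ≤ M, 0 ≤ c i) : 0 ≤ ipE M h (fun i => c i * g i) g := by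
  have hcg : ∀ i ≤ M, 0 ≤ c i * g i * g i := fun i hi => by
    rw [mul_assoc]; exact mul_nonneg (hc i hi) (mul_self_nonneg _)
  unfold ipE
  have := sum_nonneg fun i (hi : i ∈ Ioo 0 M) => hcg i (mem_Ioo.1 hi).2.le
  have := hcg 0 (Nat.zero_le M)
  have := hcg M le_rfl
  positivity

theorem ipE_dhOp_eq_neg_ipC {M : ℕ} {h : ℝ} (hh : h ≠ 0) (φ : ℕ → ℝ) {l : ℕ → ℝ}
    (hl0 : l 0 = 0) (hlM : l M = 0) :
    ipE M h (dhOp h φ) l = -ipC M h φ (DhOp h l) := by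
  rcases Nat.eq_zero_or_pos M with rfl | hM
  · simp [ipE, ipC, hl0]
  have hsum := sum_Icc_by_parts M hM φ l
  rw [hl0, hlM] at hsum
  simp only [mul_zero, sub_zero, zero_sub] at hsum
  have hcancel : ∀ a b : ℝ, h * (a / h * b) = a * b := fun a b => by field_simp
  have hcancel' : ∀ a b : ℝ, h * (a * (b / h)) = a * b := fun a b => by field_simp
  simp only [ipE, ipC, DhOp, dhOp, hl0, hlM, mul_zero, zero_div, add_zero, zero_add, mul_sum,
    hcancel, hcancel', hsum, neg_neg]

def trapWeight (M i : ℕ) : ℝ := if i = 0 ∨ i = M then 1 / 2 else 1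

theorem trapWeight_nonneg (M i : ℕ) : 0 ≤ trapWeight M i := by
  unfold trapWeight; split <;> norm_num

theorem ipE_eq_sum {M : ℕ} (hM : 0 < M) (h : ℝ) (l g : ℕ → ℝ) :
    ipE M h l g = h * ∑ i ∈ range (M + 1), trapWeight M i * (l i * g i) := by
  have hrange : range (M + 1) = insert 0 (insert M (Ioo 0 M)) := by ext i; simp; omega
  have hint : ∀ i ∈ Ioo 0 M, trapWeight M i * (l i * g i) = l i * g i := fun i hi => by
    rw [mem_Ioo] at hi
    simp [trapWeight, hi.1.ne', hi.2.ne]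
  rw [hrange, sum_insert (by simp; omega), sum_insert (by simp), sum_congr rfl hint]
  have hw0 : trapWeight M 0 = 1 / 2 := by simp [trapWeight]
  have hwM : trapWeight M M = 1 / 2 := by simp [trapWeight]
  rw [hw0, hwM, ipE]
  ring

theorem ipE_Shat_eq_sum {M : ℕ} (hM : 0 < M) (h : ℝ) (K : ℝ → ℝ) (l u x : ℕ → ℝ) :
    ipE M h l (fun i => Shat M h K u x i)
      = h ^ 2 * ∑ i ∈ range (M + 1), ∑ j ∈ range (M + 1),
          trapWeight M i * l i * (trapWeight M j * u j) * K (x i - x j) := by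
  simp only [Shat, ipE_eq_sum hM, mul_sum]
  exact sum_congr rfl fun i _ => sum_congr rfl fun j _ => by ring

theorem ipE_comp_sub_le {M : ℕ} {h : ℝ} (hh : 0 ≤ h) {V : ℝ → ℝ}
    (hV : ConvexOn ℝ Set.univ V) (hVd : Differentiable ℝ V) {u : ℕ → ℝ}
    (hu : ∀ i ≤ M, 0 ≤ u i) (a b : ℕ → ℝ) :
    ipE M h u (fun i => V (b i)) - ipE M h u (fun i => V (a i))
      ≤ ipE M h (fun i => u i * deriv V (b i)) (fun i => b i - a i) := by
  refine ipE_sub_ipE_le hh fun i hi => ?_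
  have tangent := hV.sub_le_deriv_mul_sub (Set.mem_univ (a i)) (Set.mem_univ (b i)) (hVd (b i))
  nlinarith [mul_le_mul_of_nonneg_left tangent (hu i hi)]

/-- Since `W'` is odd, `∑ᵢ∑ⱼ ωᵢωⱼ W'(bᵢ - bⱼ)(dᵢ - dⱼ) = 2 ∑ᵢ∑ⱼ ωᵢωⱼ W'(bᵢ - bⱼ) dᵢ`, which absorbs
the factor `1 / 2`. -/
theorem half_ipE_Shat_sub_le {M : ℕ} (hM : 0 < M) {h : ℝ} {W : ℝ → ℝ}
    (hW : ConvexOn ℝ Set.univ W) (hWd : Differentiable ℝ W) (hWeven : Function.Even W)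
    {u : ℕ → ℝ} (hu : ∀ i ≤ M, 0 ≤ u i) (a b : ℕ → ℝ) :
    1 / 2 * ipE M h u (fun i => Shat M h W u b i) - 1 / 2 * ipE M h u (fun i => Shat M h W u a i)
      ≤ ipE M h (fun i => u i * Shat M h (deriv W) u b i) (fun i => b i - a i) := by
  set ω : ℕ → ℝ := fun i => trapWeight M i * u i
  have hω0 : ∀ i ∈ range (M + 1), 0 ≤ ω i := fun i hi =>
    mul_nonneg (trapWeight_nonneg M i) (hu i (Nat.lt_succ_iff.1 (mem_range.1 hi)))
  have hodd : ∀ i j, ω j * ω i * deriv W (b j - b i) = -(ω i * ω j * deriv W (b i - b j)) :=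
    fun i j => by rw [← neg_sub, hWeven.deriv]; ring
  calc 1 / 2 * ipE M h u (fun i => Shat M h W u b i)
        - 1 / 2 * ipE M h u (fun i => Shat M h W u a i)
      = h ^ 2 / 2 * ∑ i ∈ range (M + 1), ∑ j ∈ range (M + 1),
          (ω i * ω j * W (b i - b j) - ω i * ω j * W (a i - a j)) := by
        simp only [ipE_Shat_eq_sum hM, sum_sub_distrib]
        ring
    _ ≤ h ^ 2 / 2 * ∑ i ∈ range (M + 1), ∑ j ∈ range (M + 1),
          ω i * ω j * deriv W (b i - b j) * ((b i - a i) - (b j - a j)) := by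
        refine mul_le_mul_of_nonneg_left (sum_le_sum fun i hi => sum_le_sum fun j hj => ?_)
          (by positivity)
        have tangent := hW.sub_le_deriv_mul_sub (Set.mem_univ (a i - a j))
          (Set.mem_univ (b i - b j)) (hWd _)
        rw [mul_assoc _ (deriv W _), ← mul_sub, sub_sub_sub_comm]
        exact mul_le_mul_of_nonneg_left tangent (mul_nonneg (hω0 i hi) (hω0 j hj))
    _ = h ^ 2 * ∑ i ∈ range (M + 1), ∑ j ∈ range (M + 1),
          ω i * ω j * deriv W (b i - b j) * (b i - a i) := by
        rw [sum_sum_mul_sub_of_antisymm _ (fun i j => ω i * ω j * deriv W (b i - b j)) hodd]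
        ring
    _ = ipE M h (fun i => u i * Shat M h (deriv W) u b i) (fun i => b i - a i) := by
        rw [ipE_mul_swap, ipE_Shat_eq_sum hM]
        exact congrArg _ (sum_congr rfl fun i _ => sum_congr rfl fun j _ => by ring)

theorem inQ.DhOp_pos {M : ℕ} {X0 XM h : ℝ} {x : ℕ → ℝ} (hx : inQ M X0 XM x) (hh : 0 < h)
    {i : ℕ} (hi1 : 1 ≤ i) (hiM : i ≤ M) : 0 < DhOp h x i :=
  div_pos (sub_pos.2 (hx.2.2 i hi1 hiM)) hh

theorem inQ.DtOp_pos {M : ℕ} {X0 XM h : ℝ} {x : ℕ → ℝ} (hx : inQ M X0 XM x) (hh : 0 < h)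
    (hM : 0 < M) {i : ℕ} (hi : i ≤ M) : 0 < DtOp M h x i := by
  have hmono := hx.2.2
  unfold DtOp
  split_ifs with h0 hM'
  · exact div_pos (sub_pos.2 (hmono 1 le_rfl hM)) hh
  · exact div_pos (sub_pos.2 (hM' ▸ hmono i (by omega) hi)) hh
  · have h1 := hmono i (by omega) hi
    have h2 := hmono (i + 1) (by omega) (by omega)
    rw [Nat.add_sub_cancel] at h2
    exact div_pos (by linarith) (by positivity)

theorem inQ.cCoef_pos {M : ℕ} {X0 XM h : ℝ} {x : ℕ → ℝ} (hx : inQ M X0 XM x) (hh : 0 < h)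
    (hM : 0 < M) {f : ℝ → ℝ} (hf : ∀ s : ℝ, 0 < s → 0 < f s) {u0 : ℕ → ℝ} {i : ℕ}
    (hu : 0 < u0 i) (hi : i ≤ M) : 0 < cCoef M h f u0 x i := by
  have hD := hx.DtOp_pos hh hM hi
  exact div_pos (pow_pos hu 2) (mul_pos hD (hf _ (div_pos hu hD)))

theorem internal_energy_sub_le {M : ℕ} {X0 XM h : ℝ} (hh : 0 < h) {H : ℝ → ℝ}
    (hH : ConvexOn ℝ (Set.Ioi 0) H) (hHd : DifferentiableOn ℝ H (Set.Ioi 0))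
    {u0half : ℕ → ℝ} (hu : ∀ i, 1 ≤ i → i ≤ M → 0 < u0half i) {a b : ℕ → ℝ}
    (ha : inQ M X0 XM a) (hb : inQ M X0 XM b) :
    h * ∑ i ∈ Icc 1 M, H (u0half i / DhOp h b i) * DhOp h b i
      - h * ∑ i ∈ Icc 1 M, H (u0half i / DhOp h a i) * DhOp h a i
      ≤ ipE M h (dhOp h (Gcell h H u0half b)) (fun i => b i - a i) := by
  have hDsub : ∀ i, DhOp h (fun j => b j - a j) i = DhOp h b i - DhOp h a i :=
    fun i => by simp only [DhOp]; ring
  rw [ipE_dhOp_eq_neg_ipC hh.ne' _ (by rw [hb.1, ha.1, sub_self])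
    (by rw [hb.2.1, ha.2.1, sub_self]), ipC, ← mul_sub, ← sum_sub_distrib, ← mul_neg,
    ← sum_neg_distrib]
  refine mul_le_mul_of_nonneg_left (sum_le_sum fun i hi => ?_) hh.le
  rw [mem_Icc] at hi
  rw [hDsub]
  exact hH.perspective_sub_le hHd (hu i hi.1 hi.2) (hb.DhOp_pos hh hi.1 hi.2)
    (ha.DhOp_pos hh hi.1 hi.2)

/-- The gradient of `ENc` with respect to `⟨·, ·⟩_E`, valid at the interior nodes only. -/
def gradENc (M : ℕ) (h : ℝ) (H Vc Wc : ℝ → ℝ) (u0 u0half x : ℕ → ℝ) (i : ℕ) : ℝ :=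
  dhOp h (Gcell h H u0half x) i + u0 i * deriv Vc (x i) + u0 i * Shat M h (deriv Wc) u0 x i

def gradENe (M : ℕ) (h : ℝ) (Ve We : ℝ → ℝ) (u0 x : ℕ → ℝ) (i : ℕ) : ℝ :=
  u0 i * deriv Ve (x i) + u0 i * Shat M h (deriv We) u0 x i

theorem EN_sub_eq_ENc_sub_ENe (M : ℕ) (h : ℝ) (H Vc Ve Wc We : ℝ → ℝ) (u0 u0half x : ℕ → ℝ) :
    EN M h H (fun s => Vc s - Ve s) (fun s => Wc s - We s) u0 u0half x
      = ENc M h H Vc Wc u0 u0half x - ENe M h Ve We u0 x := by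
  simp only [EN, ENc, ENe, Shat, ipE_sub_left, ipE_sub_right]
  ring

theorem ENc_sub_le {M : ℕ} (hM : 0 < M) {X0 XM h : ℝ} (hh : 0 < h) {H Vc Wc : ℝ → ℝ}
    (hH : ConvexOn ℝ (Set.Ioi 0) H) (hHd : DifferentiableOn ℝ H (Set.Ioi 0))
    (hVc : ConvexOn ℝ Set.univ Vc) (hVcd : Differentiable ℝ Vc)
    (hWc : ConvexOn ℝ Set.univ Wc) (hWcd : Differentiable ℝ Wc) (hWceven : Function.Even Wc)
    {u0 u0half : ℕ → ℝ} (hu0 : ∀ i ≤ M, 0 ≤ u0 i)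
    (hu0half : ∀ i, 1 ≤ i → i ≤ M → 0 < u0half i) {a b : ℕ → ℝ}
    (ha : inQ M X0 XM a) (hb : inQ M X0 XM b) :
    ENc M h H Vc Wc u0 u0half b - ENc M h H Vc Wc u0 u0half a
      ≤ ipE M h (gradENc M h H Vc Wc u0 u0half b) (fun i => b i - a i) := by
  have hHpart := internal_energy_sub_le hh hH hHd hu0half ha hb
  have hVpart := ipE_comp_sub_le hh.le hVc hVcd hu0 a b
  have hWpart := half_ipE_Shat_sub_le hM (h := h) hWc hWcd hWceven hu0 a b
  unfold ENc gradENc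
  rw [ipE_add_left, ipE_add_left]
  linarith

theorem ENe_sub_le {M : ℕ} (hM : 0 < M) {h : ℝ} (hh : 0 ≤ h) {Ve We : ℝ → ℝ}
    (hVe : ConvexOn ℝ Set.univ Ve) (hVed : Differentiable ℝ Ve)
    (hWe : ConvexOn ℝ Set.univ We) (hWed : Differentiable ℝ We) (hWeeven : Function.Even We)
    {u0 : ℕ → ℝ} (hu0 : ∀ i ≤ M, 0 ≤ u0 i) (a b : ℕ → ℝ) :
    ENe M h Ve We u0 b - ENe M h Ve We u0 a
      ≤ ipE M h (gradENe M h Ve We u0 b) (fun i => b i - a i) := by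
  have hVpart := ipE_comp_sub_le hh hVe hVed hu0 a b
  have hWpart := half_ipE_Shat_sub_le hM (h := h) hWe hWed hWeeven hu0 a b
  unfold ENe gradENe
  rw [ipE_add_left]
  linarith

theorem SchemeUpdate.ipE_gradENc_add_ipE_gradENe {M : ℕ} {h τ : ℝ} {H f Vc Ve Wc We : ℝ → ℝ}
    {u0 u0half x xp : ℕ → ℝ} (hs : SchemeUpdate M h τ H f Vc Ve Wc We u0 u0half x xp)
    (hτ : τ ≠ 0) (h0 : xp 0 = x 0) (hM : xp M = x M) :
    ipE M h (gradENc M h H Vc Wc u0 u0half xp) (fun i => xp i - x i)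
      + ipE M h (gradENe M h Ve We u0 x) (fun i => x i - xp i)
      = -(τ * ipE M h (fun i => cCoef M h f u0 x i * ((xp i - x i) / τ))
          (fun i => (xp i - x i) / τ)) := by
  simp only [ipE, h0, hM, sub_self, zero_div, mul_zero, add_zero, zero_add]
  rw [← mul_add, ← sum_add_distrib, mul_left_comm, ← mul_neg, mul_sum (a := τ), ← sum_neg_distrib]
  refine congrArg (h * ·) (sum_congr rfl fun i hi => ?_)
  rw [mem_Ioo] at hi
  have hτd : τ * (cCoef M h f u0 x i * ((xp i - x i) / τ) * ((xp i - x i) / τ))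
      = cCoef M h f u0 x i * (xp i - x i) / τ * (xp i - x i) := by field_simp
  rw [hτd]
  unfold gradENc gradENe
  linear_combination (xp i - x i) * (hs i hi.1 (by omega))

/-- **Theorem 4.2** (discrete energy dissipation law). -/
theorem discrete_energy_dissipation
    (M : ℕ) (hM : 2 ≤ M) (X0 XM : ℝ) (hX : X0 < XM)
    (h : ℝ) (hh : h = (XM - X0) / (M : ℝ)) (τ : ℝ) (hτ : 0 < τ)
    (H f Vc Ve Wc We : ℝ → ℝ)
    (hHconv : ConvexOn ℝ (Set.Ioi 0) H) (hHreg : ContDiffOn ℝ 1 H (Set.Ioi 0))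
    (hf : ∀ s : ℝ, 0 < s → 0 < f s)
    (hVcconv : ConvexOn ℝ Set.univ Vc) (hVcreg : ContDiff ℝ 1 Vc)
    (hVeconv : ConvexOn ℝ Set.univ Ve) (hVereg : ContDiff ℝ 1 Ve)
    (hWcconv : ConvexOn ℝ Set.univ Wc) (hWcreg : ContDiff ℝ 1 Wc)
    (hWeconv : ConvexOn ℝ Set.univ We) (hWereg : ContDiff ℝ 1 We)
    (hWceven : ∀ s : ℝ, Wc (-s) = Wc s) (hWeeven : ∀ s : ℝ, We (-s) = We s)
    (u0 u0half : ℕ → ℝ)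
    (hu0 : ∀ i ≤ M, 0 < u0 i)
    (hu0half : ∀ i, 1 ≤ i → i ≤ M → 0 < u0half i)
    (xn xp : ℕ → ℝ) (hxn : inQ M X0 XM xn) (hxp : inQ M X0 XM xp)
    (hsch : SchemeUpdate M h τ H f Vc Ve Wc We u0 u0half xn xp) :
    ((EN M h H (fun s => Vc s - Ve s) (fun s => Wc s - We s) u0 u0half xp
        - EN M h H (fun s => Vc s - Ve s) (fun s => Wc s - We s) u0 u0half xn) / τ
      ≤ -ipE M h (fun i => cCoef M h f u0 xn i * ((xp i - xn i) / τ))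
          (fun i => (xp i - xn i) / τ))
    ∧ (-ipE M h (fun i => cCoef M h f u0 xn i * ((xp i - xn i) / τ))
          (fun i => (xp i - xn i) / τ) ≤ 0)
    ∧ EN M h H (fun s => Vc s - Ve s) (fun s => Wc s - We s) u0 u0half xp
        ≤ EN M h H (fun s => Vc s - Ve s) (fun s => Wc s - We s) u0 u0half xn := by
  have hM0 : 0 < M := by omega
  have hh0 : 0 < h := hh ▸ div_pos (sub_pos.2 hX) (by positivity)
  have hu0' : ∀ i ≤ M, 0 ≤ u0 i := fun i hi => (hu0 i hi).le
  have hHd : DifferentiableOn ℝ H (Set.Ioi 0) := hHreg.differentiableOn one_ne_zero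
  have hc := ENc_sub_le hM0 hh0 hHconv hHd hVcconv (hVcreg.differentiable one_ne_zero) hWcconv
    (hWcreg.differentiable one_ne_zero) hWceven hu0' hu0half hxn hxp
  have he := ENe_sub_le hM0 hh0.le hVeconv (hVereg.differentiable one_ne_zero) hWeconv
    (hWereg.differentiable one_ne_zero) hWeeven hu0' xp xn
  have hgrad := hsch.ipE_gradENc_add_ipE_gradENe hτ.ne' (hxp.1.trans hxn.1.symm)
    (hxp.2.1.trans hxn.2.1.symm)
  have hdiss : 0 ≤ ipE M h (fun i => cCoef M h f u0 xn i * ((xp i - xn i) / τ))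
      (fun i => (xp i - xn i) / τ) :=
    ipE_mul_self_nonneg hh0.le fun i hi => (hxn.cCoef_pos hh0 hM0 hf (hu0 i hi) hi).le
  have hτdiss := mul_nonneg hτ.le hdiss
  rw [EN_sub_eq_ENc_sub_ENe, EN_sub_eq_ENc_sub_ENe, div_le_iff₀ hτ]
  refine ⟨by linarith, by linarith, by linarith⟩
end
end

section
/- Let (xⁿ)_{n≥0} ⊆ Q be such that xⁿ⁺¹ is a scheme update of xⁿ for every n ≥ 0, and suppose xⁿ converges componentwise to some x^∞ ∈ Q (i.e. x^∞ is strictly increasing with x^∞₀ = X₀ and x^∞_M = X_M). Assume f, H′, V_c′, V_e′, W_c′, W_e′ are continuous. Then x^∞ solves the discrete steady-state boundary value problem: for every 1 ≤ i ≤ M−1, −(d_h G[x^∞])_i − u_{0,i}(V_c′ − V_e′)(x^∞_i) − u_{0,i}(Ŝ_c[x^∞]_i − Ŝ_e[x^∞]_i) = 0, together with x^∞₀ = X₀ and x^∞_M = X_M; i.e., the scheme is steady-state preserving. (Part of Theorem 4.4.) -/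
open Finset Filter

noncomputable section

/-!
Passing to the limit `n → ∞` in the scheme equation at node `i`: every operator appearing in it
(`D_h`, `d_h`, `D̃_h`, `⟨·,·⟩_E`, `G`, `c`) is continuous at a point of `Q` in the finitely many
coordinates it reads, so the left-hand side `c[xⁿ]_i (xⁿ⁺¹_i - xⁿ_i)/τ` tends to `c[x^∞]_i · 0 / τ = 0`,
while the right-hand side tends to the steady-state residual at `x^∞`. The division by `D_h x` and
`D̃_h x` is harmless since these are positive on `Q`, and `c[x^∞]_i` is finite because `f > 0`.
-/

open Topology

section Positivity

variable {M : ℕ} {X0 XM h : ℝ} {y : ℕ → ℝ}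

theorem DhOp_pos_of_inQ (hy : inQ M X0 XM y) (hh : 0 < h) {k : ℕ} (hk1 : 1 ≤ k) (hkM : k ≤ M) :
    0 < DhOp h y k :=
  div_pos (sub_pos.2 (hy.2.2 k hk1 hkM)) hh

theorem DtOp_pos_of_inQ (hy : inQ M X0 XM y) (hh : 0 < h) (hM : 1 ≤ M) {i : ℕ} (hi : i ≤ M) :
    0 < DtOp M h y i := by
  have hstep := hy.2.2
  unfold DtOp
  split_ifs with hi0 hiM
  · exact div_pos (sub_pos.2 (hstep 1 le_rfl hM)) hh
  · exact div_pos (sub_pos.2 (hstep M hM le_rfl)) hh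
  · have hlo := hstep i (by omega) hi
    have hhi : y i < y (i + 1) := hstep (i + 1) (by omega) (by omega)
    exact div_pos (by linarith) (by linarith)

end Positivity

section Continuity

variable {α : Type*} {l : Filter α} {M : ℕ} {h : ℝ} {x : α → ℕ → ℝ} {y : ℕ → ℝ}

theorem tendsto_DhOp {k : ℕ} (hk : Tendsto (fun a => x a k) l (𝓝 (y k)))
    (hk' : Tendsto (fun a => x a (k - 1)) l (𝓝 (y (k - 1)))) :
    Tendsto (fun a => DhOp h (x a) k) l (𝓝 (DhOp h y k)) :=
  (hk.sub hk').div_const h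

theorem tendsto_dhOp {φ : α → ℕ → ℝ} {ψ : ℕ → ℝ} {i : ℕ}
    (hi : Tendsto (fun a => φ a i) l (𝓝 (ψ i)))
    (hi' : Tendsto (fun a => φ a (i + 1)) l (𝓝 (ψ (i + 1)))) :
    Tendsto (fun a => dhOp h (φ a) i) l (𝓝 (dhOp h ψ i)) :=
  (hi'.sub hi).div_const h

theorem tendsto_DtOp (hx : ∀ j ≤ M, Tendsto (fun a => x a j) l (𝓝 (y j))) (hM : 1 ≤ M)
    {i : ℕ} (hi : i ≤ M) : Tendsto (fun a => DtOp M h (x a) i) l (𝓝 (DtOp M h y i)) := by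
  unfold DtOp
  split_ifs with hi0 hiM
  · exact ((hx 1 hM).sub (hx 0 (Nat.zero_le M))).div_const h
  · exact ((hx M le_rfl).sub (hx (M - 1) (Nat.sub_le M 1))).div_const h
  · exact ((hx (i + 1) (by omega)).sub (hx (i - 1) (by omega))).div_const (2 * h)

theorem tendsto_ipE {g w : α → ℕ → ℝ} {z v : ℕ → ℝ}
    (hg : ∀ j ≤ M, Tendsto (fun a => g a j) l (𝓝 (z j)))
    (hw : ∀ j ≤ M, Tendsto (fun a => w a j) l (𝓝 (v j))) :
    Tendsto (fun a => ipE M h (g a) (w a)) l (𝓝 (ipE M h z v)) := by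
  have hterm : ∀ j ≤ M, Tendsto (fun a => g a j * w a j) l (𝓝 (z j * v j)) :=
    fun j hj => (hg j hj).mul (hw j hj)
  refine Tendsto.const_mul h (Tendsto.add (Tendsto.add ?_ ?_) ?_)
  · exact (hterm 0 (Nat.zero_le M)).div_const 2
  · exact tendsto_finsetSum _ fun j hj => hterm j (mem_Ioo.1 hj).2.le
  · exact (hterm M le_rfl).div_const 2

theorem tendsto_Shat {K : ℝ → ℝ} (hK : Continuous K) {u0 : ℕ → ℝ}
    (hx : ∀ j ≤ M, Tendsto (fun a => x a j) l (𝓝 (y j))) {i : ℕ} (hi : i ≤ M) :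
    Tendsto (fun a => Shat M h K u0 (x a) i) l (𝓝 (Shat M h K u0 y i)) :=
  tendsto_ipE (fun j hj => (hK.tendsto _).comp ((hx i hi).sub (hx j hj)))
    fun _ _ => tendsto_const_nhds

theorem tendsto_Gcell {H : ℝ → ℝ} (hH : ContinuousOn H (Set.Ioi 0))
    (hH' : ContinuousOn (deriv H) (Set.Ioi 0)) {u0half : ℕ → ℝ} {k : ℕ} (hu : 0 < u0half k)
    (hD : 0 < DhOp h y k) (hk : Tendsto (fun a => x a k) l (𝓝 (y k)))
    (hk' : Tendsto (fun a => x a (k - 1)) l (𝓝 (y (k - 1)))) :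
    Tendsto (fun a => Gcell h H u0half (x a) k) l (𝓝 (Gcell h H u0half y k)) := by
  have hs := (tendsto_const_nhds (x := u0half k)).div (tendsto_DhOp (h := h) hk hk') hD.ne'
  have hmem : Set.Ioi (0 : ℝ) ∈ 𝓝 (u0half k / DhOp h y k) := Ioi_mem_nhds (div_pos hu hD)
  exact (hs.mul ((hH'.continuousAt hmem).tendsto.comp hs)).sub
    ((hH.continuousAt hmem).tendsto.comp hs)

theorem tendsto_cCoef {f : ℝ → ℝ} (hf : ContinuousOn f (Set.Ioi 0))
    (hfpos : ∀ s : ℝ, 0 < s → 0 < f s) {u0 : ℕ → ℝ} {i : ℕ} (hu : 0 < u0 i)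
    (hD : 0 < DtOp M h y i) (hDt : Tendsto (fun a => DtOp M h (x a) i) l (𝓝 (DtOp M h y i))) :
    Tendsto (fun a => cCoef M h f u0 (x a) i) l (𝓝 (cCoef M h f u0 y i)) := by
  have hs := (tendsto_const_nhds (x := u0 i)).div hDt hD.ne'
  have hpos : 0 < u0 i / DtOp M h y i := div_pos hu hD
  have hfs := (hf.continuousAt (Ioi_mem_nhds hpos)).tendsto.comp hs
  exact tendsto_const_nhds.div (hDt.mul hfs) (mul_pos hD (hfpos _ hpos)).ne'

end Continuity

theorem steady_state_preserving_general
    (M : ℕ) (X0 XM : ℝ) (hX : X0 < XM)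
    (h : ℝ) (hh : h = (XM - X0) / (M : ℝ)) (τ : ℝ)
    (H f Vc Ve Wc We : ℝ → ℝ)
    (hHreg : ContDiffOn ℝ 1 H (Set.Ioi 0))
    (hf : ∀ s : ℝ, 0 < s → 0 < f s)
    (u0 u0half : ℕ → ℝ)
    (hu0 : ∀ i ≤ M, 0 < u0 i)
    (hu0half : ∀ i, 1 ≤ i → i ≤ M → 0 < u0half i)
    (hfc : ContinuousOn f (Set.Ioi 0)) (hH'c : ContinuousOn (deriv H) (Set.Ioi 0))
    (hVc'c : Continuous (deriv Vc)) (hVe'c : Continuous (deriv Ve))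
    (hWc'c : Continuous (deriv Wc)) (hWe'c : Continuous (deriv We))
    (x : ℕ → ℕ → ℝ)
    (hupd : ∀ n, SchemeUpdate M h τ H f Vc Ve Wc We u0 u0half (x n) (x (n + 1)))
    (xinf : ℕ → ℝ) (hxinf : inQ M X0 XM xinf)
    (hconv : ∀ i ≤ M, Tendsto (fun n => x n i) atTop (nhds (xinf i))) :
    (∀ i, 1 ≤ i → i ≤ M - 1 →
      -dhOp h (Gcell h H u0half xinf) i
        - u0 i * (deriv Vc (xinf i) - deriv Ve (xinf i))
        - u0 i * (Shat M h (deriv Wc) u0 xinf i - Shat M h (deriv We) u0 xinf i) = 0)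
    ∧ xinf 0 = X0 ∧ xinf M = XM := by
  refine ⟨fun i hi1 hiM => ?_, hxinf.1, hxinf.2.1⟩
  have hi : i ≤ M := by omega
  have hhpos : 0 < h := hh ▸ div_pos (sub_pos.2 hX) (by exact_mod_cast (by omega : 0 < M))
  have hnext : ∀ j ≤ M, Tendsto (fun n => x (n + 1) j) atTop (𝓝 (xinf j)) :=
    fun j hj => (hconv j hj).comp (tendsto_add_atTop_nat 1)
  have hG : ∀ k, 1 ≤ k → k ≤ M → Tendsto (fun n => Gcell h H u0half (x (n + 1)) k) atTop
      (𝓝 (Gcell h H u0half xinf k)) := fun k hk1 hkM =>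
    tendsto_Gcell hHreg.continuousOn hH'c (hu0half k hk1 hkM)
      (DhOp_pos_of_inQ hxinf hhpos hk1 hkM) (hnext k hkM) (hnext (k - 1) (by omega))
  have hc := tendsto_cCoef hfc hf (hu0 i hi) (DtOp_pos_of_inQ hxinf hhpos (by omega) hi)
    (tendsto_DtOp (h := h) hconv (by omega) hi)
  have hlhs : Tendsto (fun n => cCoef M h f u0 (x n) i * (x (n + 1) i - x n i) / τ) atTop
      (𝓝 0) := by
    simpa using (hc.mul ((hnext i hi).sub (hconv i hi))).div_const τ
  have hdG := tendsto_dhOp (h := h) (hG i hi1 hi) (hG (i + 1) (by omega) (by omega))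
  have hVc := (hVc'c.tendsto _).comp (hnext i hi)
  have hVe := (hVe'c.tendsto _).comp (hconv i hi)
  have hSc := tendsto_Shat (h := h) (u0 := u0) hWc'c hnext hi
  have hSe := tendsto_Shat (h := h) (u0 := u0) hWe'c hconv hi
  have hrhs := (((hdG.neg.sub (hVc.const_mul (u0 i))).add (hVe.const_mul (u0 i))).sub
    (hSc.const_mul (u0 i))).add (hSe.const_mul (u0 i))
  have := tendsto_nhds_unique (hrhs.congr fun n => (hupd n i hi1 hiM).symm) hlhs
  linarith

/-- Part of **Theorem 4.4** (steady-state preserving): a componentwise limit `x^∞ ∈ Q` of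
scheme iterates solves the discrete steady-state boundary value problem. -/
theorem steady_state_preserving
    (M : ℕ) (hM : 2 ≤ M) (X0 XM : ℝ) (hX : X0 < XM)
    (h : ℝ) (hh : h = (XM - X0) / (M : ℝ)) (τ : ℝ) (hτ : 0 < τ)
    (H f Vc Ve Wc We : ℝ → ℝ)
    (hHconv : ConvexOn ℝ (Set.Ioi 0) H) (hHreg : ContDiffOn ℝ 1 H (Set.Ioi 0))
    (hf : ∀ s : ℝ, 0 < s → 0 < f s)
    (hVcconv : ConvexOn ℝ Set.univ Vc) (hVcreg : ContDiff ℝ 1 Vc)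
    (hVeconv : ConvexOn ℝ Set.univ Ve) (hVereg : ContDiff ℝ 1 Ve)
    (hWcconv : ConvexOn ℝ Set.univ Wc) (hWcreg : ContDiff ℝ 1 Wc)
    (hWeconv : ConvexOn ℝ Set.univ We) (hWereg : ContDiff ℝ 1 We)
    (hWceven : ∀ s : ℝ, Wc (-s) = Wc s) (hWeeven : ∀ s : ℝ, We (-s) = We s)
    (u0 u0half : ℕ → ℝ)
    (hu0 : ∀ i ≤ M, 0 < u0 i)
    (hu0half : ∀ i, 1 ≤ i → i ≤ M → 0 < u0half i)
    (hfc : ContinuousOn f (Set.Ioi 0)) (hH'c : ContinuousOn (deriv H) (Set.Ioi 0))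
    (hVc'c : Continuous (deriv Vc)) (hVe'c : Continuous (deriv Ve))
    (hWc'c : Continuous (deriv Wc)) (hWe'c : Continuous (deriv We))
    (x : ℕ → ℕ → ℝ) (hxQ : ∀ n, inQ M X0 XM (x n))
    (hupd : ∀ n, SchemeUpdate M h τ H f Vc Ve Wc We u0 u0half (x n) (x (n + 1)))
    (xinf : ℕ → ℝ) (hxinf : inQ M X0 XM xinf)
    (hconv : ∀ i ≤ M, Tendsto (fun n => x n i) atTop (nhds (xinf i))) :
    (∀ i, 1 ≤ i → i ≤ M - 1 →
      -dhOp h (Gcell h H u0half xinf) i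
        - u0 i * (deriv Vc (xinf i) - deriv Ve (xinf i))
        - u0 i * (Shat M h (deriv Wc) u0 xinf i - Shat M h (deriv We) u0 xinf i) = 0)
    ∧ xinf 0 = X0 ∧ xinf M = XM :=
  steady_state_preserving_general M X0 XM hX h hh τ H f Vc Ve Wc We hHreg hf u0 u0half hu0 hu0half
    hfc hH'c hVc'c hVe'c hWc'c hWe'c x hupd xinf hxinf hconv
end
end
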